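/- arXiv:math/0411138 — 3 statements merged into one kernel-verified Lean document; each statement's English description precedes it below -/
import Mathlib

section
/- Every finite digraph that contains no directed circuit (a DAG) has exactly one kernel. -/
/-- A kernel of a digraph with vertex set `V` and arc relation `E` is a nonempty
independent dominating set. -/
def IsKernel {V : Type*} (E : V → V → Prop) (K : Set V) : Prop :=
  K.Nonempty ∧ (∀ a ∈ K, ∀ b ∈ K, ¬ E a b) ∧ (∀ a, a ∉ K → ∃ b ∈ K, E a b)

/-- Every finite digraph without a directed circuit (equivalently, whose arc relation
has an irreflexive transitive closure) on a nonempty vertex set has exactly one kernel. -/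
theorem stmt1 {V : Type*} [Fintype V] [Nonempty V] (E : V → V → Prop)
    (hloopless : ∀ v, ¬ E v v)
    (hDAG : ∀ v, ¬ Relation.TransGen E v v) :
    ∃! K : Set V, IsKernel E K := by
  classical
  -- The flipped relation is well-founded
  have hwf : WellFounded (fun w v => E v w) := by
    haveI : IsTrans V (fun w v => Relation.TransGen E v w) :=
      ⟨fun a b c hab hbc => Relation.TransGen.trans hbc hab⟩
    haveI : IsIrrefl V (fun w v => Relation.TransGen E v w) := ⟨fun a => hDAG a⟩
    have hwf' : WellFounded (fun w v => Relation.TransGen E v w) :=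
      Finite.wellFounded_of_trans_of_irrefl _
    exact Subrelation.wf (fun h => Relation.TransGen.single h) hwf'
  -- define membership in the canonical kernel by well-founded recursion
  set inK : V → Prop := hwf.fix (C := fun _ => Prop)
    (fun v rec => ∀ w, (h : E v w) → ¬ rec w h) with hinK
  have hiff : ∀ v, inK v ↔ ∀ w, E v w → ¬ inK w := by
    intro v
    have := hwf.fix_eq (C := fun _ => Prop)
      (fun v rec => ∀ w, (h : E v w) → ¬ rec w h) v
    rw [hinK, this]
  set K : Set V := {v | inK v} with hK
  -- any kernel equals K, proved by well-founded induction
  have key : ∀ K' : Set V, IsKernel E K' → ∀ v, v ∈ K' ↔ v ∈ K := by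
    intro K' ⟨_, hind, hdom⟩
    intro v
    induction v using hwf.induction with
    | _ v IH =>
      constructor
      · intro hv
        show inK v
        rw [hiff]
        intro w hw hwK
        have hwK' : w ∈ K' := (IH w hw).mpr hwK
        exact hind v hv w hwK' hw
      · intro hv
        by_contra hvK'
        obtain ⟨w, hwK', hw⟩ := hdom v hvK'
        have hwK : inK w := (IH w hw).mp hwK'
        have := (hiff v).mp hv w hw
        exact this hwK
  -- K is a kernel
  have hker : IsKernel E K := by
    refine ⟨?_, ?_, ?_⟩
    · by_contra hne
      rw [Set.not_nonempty_iff_eq_empty] at hne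
      obtain ⟨v⟩ := ‹Nonempty V›
      -- show v ∈ K by induction: every vertex either in K or has successor in K
      have : ∀ u, inK u ∨ ∃ w, E u w ∧ inK w := by
        intro u
        by_cases hu : inK u
        · exact Or.inl hu
        · right
          rw [hiff] at hu
          push_neg at hu
          obtain ⟨w, hw, hwK⟩ := hu
          exact ⟨w, hw, hwK⟩
      rcases this v with h | ⟨w, _, h⟩
      · exact absurd h (by rw [hK] at hne; simpa [Set.eq_empty_iff_forall_notMem] using
          (Set.eq_empty_iff_forall_notMem.mp hne v))
      · exact (Set.eq_empty_iff_forall_notMem.mp hne w) h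
    · intro a ha b hb hab
      exact (hiff a).mp ha b hab hb
    · intro a ha
      have : ¬ inK a := ha
      rw [hiff] at this
      push_neg at this
      obtain ⟨w, hw, hwK⟩ := this
      exact ⟨w, hwK, hw⟩
  exact ⟨K, hker, fun K' hK' => Set.ext fun v => key K' hK' v⟩
end

section
/- For every n ≥ 1, the number of well-colored rooted labeled ditrees on n vertices equals (2n)^{n-1}. Equivalently, the exponential generating function T(z) of well-colored rooted labeled ditrees satisfies T(z) = C(2z)/2, where C is the Cayley tree function. -/
/-- A rooted labeled ditree on `n` vertices: a labeled tree on `Fin n` in which every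
edge is given one of its two possible orientations, together with a distinguished root. -/
structure RootedDitree (n : ℕ) where
  /-- `arc v w = true` means there is an arc from `v` to `w` (so `w` is a child of `v`). -/
  arc : Fin n → Fin n → Bool
  root : Fin n
  loopless : ∀ v, arc v v = false
  oneWay : ∀ v w, arc v w = true → arc w v = false
  tree : (SimpleGraph.fromRel fun v w => arc v w = true).IsTree

/-- A well-colored rooted labeled ditree: vertices are 2-colored red/green
(`red v = true` means red), every green vertex has at least one red child (out-neighbor),
and no red vertex has a red child. -/
structure WCRootedDitree (n : ℕ) extends RootedDitree n where
  red : Fin n → Bool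
  greenRedChild : ∀ v, red v = false → ∃ w, arc v w = true ∧ red w = true
  redNoRedChild : ∀ v w, red v = true → arc v w = true → red w = false

/-- The Cayley tree function `C(z) = Σ_{n ≥ 1} n^(n-1) zⁿ/n!`. -/
noncomputable def cayley : PowerSeries ℝ :=
  PowerSeries.mk fun n => if n = 0 then 0 else (n : ℝ) ^ (n - 1) / (n.factorial : ℝ)

namespace WCD

variable {n : ℕ}

/-! ### Basics about parent functions -/

lemma iterate_mul_fixed {α : Type*} {f : α → α} {v : α} {m : ℕ} (h : f^[m] v = v) :
    ∀ t, f^[m * t] v = v := by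
  intro t
  induction t with
  | zero => simp
  | succ t ih => rw [Nat.mul_succ, Function.iterate_add_apply, h, ih]

/-- A parent function with root `r`. -/
def IsTF (p : Fin n → Fin n) (r : Fin n) : Prop :=
  p r = r ∧ ∀ v, ∃ m, p^[m] v = r

lemma IsTF.iter_root {p : Fin n → Fin n} {r : Fin n} (h : IsTF p r) (t : ℕ) :
    p^[t] r = r := Function.iterate_fixed h.1 t

lemma IsTF.eq_root_of_periodic {p : Fin n → Fin n} {r : Fin n} (h : IsTF p r)
    {v : Fin n} {m : ℕ} (hm : 1 ≤ m) (hv : p^[m] v = v) : v = r := by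
  obtain ⟨j, hj⟩ := h.2 v
  have h1 : p^[m * j] v = v := iterate_mul_fixed hv j
  have h2 : m * j = (m * j - j) + j := by
    have : j ≤ m * j := Nat.le_mul_of_pos_left j hm
    omega
  rw [h2, Function.iterate_add_apply, hj, h.iter_root] at h1
  exact h1.symm

/-- Depth of a vertex: number of steps to reach the root. -/
noncomputable def tdepth (p : Fin n → Fin n) (r : Fin n) (v : Fin n) : ℕ :=
  sInf {m | p^[m] v = r}

lemma IsTF.iterate_tdepth {p : Fin n → Fin n} {r : Fin n} (h : IsTF p r) (v : Fin n) :
    p^[tdepth p r v] v = r :=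
  Nat.sInf_mem (h.2 v)

lemma tdepth_min {p : Fin n → Fin n} {r v : Fin n} {i : ℕ}
    (hi : i < tdepth p r v) : p^[i] v ≠ r :=
  Nat.notMem_of_lt_sInf hi

lemma IsTF.tdepth_eq_zero {p : Fin n → Fin n} {r : Fin n} (h : IsTF p r) {v : Fin n} :
    tdepth p r v = 0 ↔ v = r := by
  constructor
  · intro h0
    have := h.iterate_tdepth v
    rwa [h0] at this
  · rintro rfl
    simp [tdepth, Nat.sInf_eq_zero]

lemma IsTF.orbit_distinct {p : Fin n → Fin n} {r : Fin n} (h : IsTF p r) {v : Fin n}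
    {i j : ℕ} (hij : i < j) (hj : j ≤ tdepth p r v) : p^[i] v ≠ p^[j] v := by
  intro heq
  have h1 : p^[tdepth p r v - j] (p^[j] v) = r := by
    rw [← Function.iterate_add_apply, Nat.sub_add_cancel hj]
    exact h.iterate_tdepth v
  rw [← heq, ← Function.iterate_add_apply] at h1
  exact tdepth_min (by omega) h1

lemma IsTF.tdepth_parent {p : Fin n → Fin n} {r : Fin n} (h : IsTF p r) {v : Fin n}
    (hv : v ≠ r) : tdepth p r (p v) + 1 = tdepth p r v := by
  have hd : 1 ≤ tdepth p r v := by
    rcases Nat.eq_zero_or_pos (tdepth p r v) with h0 | h0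
    · exact absurd (h.tdepth_eq_zero.1 h0) hv
    · exact h0
  have h1 : p^[tdepth p r v - 1] (p v) = r := by
    have h0 : p^[tdepth p r v - 1 + 1] v = r := by
      have : tdepth p r v - 1 + 1 = tdepth p r v := by omega
      rw [this]; exact h.iterate_tdepth v
    rwa [Function.iterate_succ_apply] at h0
  have h2 : tdepth p r (p v) ≤ tdepth p r v - 1 := Nat.sInf_le h1
  rcases Nat.lt_or_ge (tdepth p r (p v)) (tdepth p r v - 1) with hlt | hge
  · exfalso
    have h3 : p^[tdepth p r (p v) + 1] v = r := by
      rw [Function.iterate_succ_apply]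
      exact h.iterate_tdepth (p v)
    exact tdepth_min (by omega) h3
  · omega

/-! ### Orbits -/

open Classical in
/-- The forward orbit of `b` under `p`, as a finset. -/
noncomputable def orb (p : Fin n → Fin n) (b : Fin n) : Finset (Fin n) :=
  Finset.univ.filter (fun w => ∃ i, p^[i] b = w)

lemma mem_orb {p : Fin n → Fin n} {b w : Fin n} : w ∈ orb p b ↔ ∃ i, p^[i] b = w := by
  simp [orb]

lemma self_mem_orb {p : Fin n → Fin n} (b : Fin n) : b ∈ orb p b :=
  mem_orb.2 ⟨0, rfl⟩

lemma iterate_mem_orb {p : Fin n → Fin n} (b : Fin n) (i : ℕ) : p^[i] b ∈ orb p b :=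
  mem_orb.2 ⟨i, rfl⟩

lemma IsTF.orb_eq_image {p : Fin n → Fin n} {r : Fin n} (h : IsTF p r) (b : Fin n) :
    orb p b = (Finset.range (tdepth p r b + 1)).image (fun i => p^[i] b) := by
  ext w
  simp only [mem_orb, Finset.mem_image, Finset.mem_range]
  constructor
  · rintro ⟨i, rfl⟩
    rcases le_or_gt i (tdepth p r b) with hi | hi
    · exact ⟨i, by omega, rfl⟩
    · refine ⟨tdepth p r b, by omega, ?_⟩
      have : p^[i] b = p^[i - tdepth p r b] (p^[tdepth p r b] b) := by
        rw [← Function.iterate_add_apply]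
        congr 1
        omega
      rw [this, h.iterate_tdepth, h.iter_root]
  · rintro ⟨i, _, rfl⟩
    exact ⟨i, rfl⟩

lemma IsTF.card_orb {p : Fin n → Fin n} {r : Fin n} (h : IsTF p r) (b : Fin n) :
    (orb p b).card = tdepth p r b + 1 := by
  rw [h.orb_eq_image b]
  rw [Finset.card_image_of_injOn, Finset.card_range]
  intro i hi j hj hij
  simp only [Finset.coe_range, Set.mem_Iio, Finset.mem_coe, Finset.mem_range] at hi hj
  by_contra hne
  rcases Nat.lt_or_ge i j with hlt | hge
  · exact h.orbit_distinct hlt (by omega) hij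
  · exact h.orbit_distinct (show j < i by omega) (by omega) hij.symm

lemma root_mem_orb {p : Fin n → Fin n} {r : Fin n} (h : IsTF p r) (b : Fin n) :
    r ∈ orb p b := by
  rw [mem_orb]
  exact ⟨tdepth p r b, h.iterate_tdepth b⟩

/-! ### Periodic points -/

open Classical in
/-- The set of periodic points of `f`. -/
noncomputable def per (f : Fin n → Fin n) : Finset (Fin n) :=
  Finset.univ.filter (fun v => ∃ m, 1 ≤ m ∧ f^[m] v = v)

lemma mem_per {f : Fin n → Fin n} {v : Fin n} :
    v ∈ per f ↔ ∃ m, 1 ≤ m ∧ f^[m] v = v := by simp [per]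

lemma per_closed {f : Fin n → Fin n} {v : Fin n} (hv : v ∈ per f) : f v ∈ per f := by
  obtain ⟨m, hm, hmv⟩ := mem_per.1 hv
  refine mem_per.2 ⟨m, hm, ?_⟩
  rw [← Function.iterate_succ_apply, Function.iterate_succ_apply', hmv]

lemma per_injOn {f : Fin n → Fin n} {a b : Fin n} (ha : a ∈ per f) (hb : b ∈ per f)
    (hab : f a = f b) : a = b := by
  obtain ⟨ma, hma, hmaa⟩ := mem_per.1 ha
  obtain ⟨mb, hmb, hmbb⟩ := mem_per.1 hb
  have hMa : f^[ma * mb] a = a := iterate_mul_fixed hmaa mb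
  have hMb : f^[ma * mb] b = b := by
    rw [Nat.mul_comm]; exact iterate_mul_fixed hmbb ma
  have hM1 : 1 ≤ ma * mb := Nat.one_le_iff_ne_zero.2 (by positivity)
  have key : f^[ma * mb] a = f^[ma * mb] b := by
    have ha' : f^[ma * mb] a = f^[ma * mb - 1] (f a) := by
      rw [← Function.iterate_succ_apply]
      congr 1
      omega
    have hb' : f^[ma * mb] b = f^[ma * mb - 1] (f b) := by
      rw [← Function.iterate_succ_apply]
      congr 1
      omega
    rw [ha', hb', hab]
  rw [hMa, hMb] at key
  exact key

lemma exists_iterate_mem_per (f : Fin n → Fin n) (v : Fin n) :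
    ∃ i, f^[i] v ∈ per f := by
  have hcard : Fintype.card (Fin n) < Fintype.card (Fin (n + 1)) := by simp
  obtain ⟨a, c, hne, heq⟩ :=
    Fintype.exists_ne_map_eq_of_card_lt (fun i : Fin (n + 1) => f^[(i : ℕ)] v) hcard
  rcases Ne.lt_or_gt hne with hlt | hlt
  · refine ⟨a, mem_per.2 ⟨(c : ℕ) - a, by omega, ?_⟩⟩
    rw [← Function.iterate_add_apply]
    have : (c : ℕ) - a + a = c := by omega
    rw [this, heq]
  · refine ⟨c, mem_per.2 ⟨(a : ℕ) - c, by omega, ?_⟩⟩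
    rw [← Function.iterate_add_apply]
    have : (a : ℕ) - c + c = a := by omega
    rw [this, heq]

lemma per_nonempty (f : Fin n → Fin n) (hn : 1 ≤ n) : (per f).Nonempty := by
  obtain ⟨i, hi⟩ := exists_iterate_mem_per f ⟨0, hn⟩
  exact ⟨_, hi⟩
/-! ### The Joyal-style map -/

/-- Joyal's map: given a parent function `p` and a marked vertex `b`, produce an
arbitrary endofunction by re-reading the spine (orbit of `b`) in sorted order. -/
noncomputable def psi (p : Fin n → Fin n) (b : Fin n) : Fin n → Fin n :=
  fun v => if v ∈ orb p b then p^[((orb p b).sort (· ≤ ·)).idxOf v] b else p v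

lemma psi_apply_not_mem {p : Fin n → Fin n} {b v : Fin n} (hv : v ∉ orb p b) :
    psi p b v = p v := if_neg hv

lemma psi_apply_getElem {p : Fin n → Fin n} {b : Fin n} {i : ℕ}
    (hi : i < ((orb p b).sort (· ≤ ·)).length) :
    psi p b (((orb p b).sort (· ≤ ·))[i]) = p^[i] b := by
  have hmem : ((orb p b).sort (· ≤ ·))[i] ∈ orb p b :=
    (Finset.mem_sort _).1 (List.getElem_mem hi)
  rw [psi, if_pos hmem, List.Nodup.idxOf_getElem (Finset.sort_nodup _ _) i hi]

lemma psi_mem_orb {p : Fin n → Fin n} {b v : Fin n} (hv : v ∈ orb p b) :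
    psi p b v ∈ orb p b := by
  rw [psi, if_pos hv]; exact iterate_mem_orb b _

lemma psi_iterate_mem_orb {p : Fin n → Fin n} {b v : Fin n} (hv : v ∈ orb p b) (m : ℕ) :
    (psi p b)^[m] v ∈ orb p b := by
  induction m with
  | zero => simpa
  | succ m ih => rw [Function.iterate_succ_apply']; exact psi_mem_orb ih

lemma psi_injOn {p : Fin n → Fin n} {r : Fin n} (h : IsTF p r) {b u v : Fin n}
    (hu : u ∈ orb p b) (hv : v ∈ orb p b) (huv : psi p b u = psi p b v) : u = v := by
  set l := (orb p b).sort (· ≤ ·) with hl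
  have hul : u ∈ l := (Finset.mem_sort _).2 hu
  have hvl : v ∈ l := (Finset.mem_sort _).2 hv
  have hulen : l.idxOf u < l.length := List.idxOf_lt_length_iff.2 hul
  have hvlen : l.idxOf v < l.length := List.idxOf_lt_length_iff.2 hvl
  have hlen : l.length = tdepth p r b + 1 := by
    rw [hl, Finset.length_sort, h.card_orb]
  have h1 : psi p b u = p^[l.idxOf u] b := by
    have := psi_apply_getElem (p := p) (b := b) hulen
    rwa [List.getElem_idxOf hulen] at this
  have h2 : psi p b v = p^[l.idxOf v] b := by
    have := psi_apply_getElem (p := p) (b := b) hvlen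
    rwa [List.getElem_idxOf hvlen] at this
  have hidx : l.idxOf u = l.idxOf v := by
    by_contra hne
    rcases Ne.lt_or_gt hne with hlt | hlt
    · exact h.orbit_distinct (v := b) hlt (by omega) (by rw [← h1, ← h2, huv])
    · exact h.orbit_distinct (v := b) hlt (by omega) (by rw [← h2, ← h1, huv.symm])
  exact (List.idxOf_inj hul).1 hidx

lemma psi_iterate_cancel {p : Fin n → Fin n} {r : Fin n} (h : IsTF p r) {b : Fin n}
    (m : ℕ) : ∀ u v, u ∈ orb p b → v ∈ orb p b →
      (psi p b)^[m] u = (psi p b)^[m] v → u = v := by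
  induction m with
  | zero => intro u v _ _ h'; simpa using h'
  | succ m ih =>
    intro u v hu hv h'
    rw [Function.iterate_succ_apply, Function.iterate_succ_apply] at h'
    exact psi_injOn h hu hv (ih _ _ (psi_mem_orb hu) (psi_mem_orb hv) h')

lemma per_psi {p : Fin n → Fin n} {r : Fin n} (h : IsTF p r) (b : Fin n) :
    per (psi p b) = orb p b := by
  apply Finset.Subset.antisymm
  · -- periodic points are in the orbit
    intro v hv
    obtain ⟨m, hm, hmv⟩ := mem_per.1 hv
    -- first, some iterate of v lies in the orbit
    have key : ∀ D v, tdepth p r v ≤ D → ∃ i, (psi p b)^[i] v ∈ orb p b := by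
      intro D
      induction D with
      | zero =>
        intro v hD
        have : v = r := h.tdepth_eq_zero.1 (by omega)
        exact ⟨0, by simpa [this] using root_mem_orb h b⟩
      | succ D ih =>
        intro v hD
        by_cases hvo : v ∈ orb p b
        · exact ⟨0, by simpa⟩
        · have hvr : v ≠ r := by
            intro hvr; exact hvo (hvr ▸ root_mem_orb h b)
          obtain ⟨i, hi⟩ := ih (p v) (by have := h.tdepth_parent hvr; omega)
          refine ⟨i + 1, ?_⟩
          rwa [Function.iterate_succ_apply, psi_apply_not_mem hvo]
    obtain ⟨i, hi⟩ := key (tdepth p r v) v le_rfl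
    rcases Nat.eq_zero_or_pos i with rfl | hipos
    · rwa [Function.iterate_zero_apply] at hi
    · have h1 : (psi p b)^[m * i] v = v := iterate_mul_fixed hmv i
      have h2 : m * i = (m * i - i) + i := by
        have : i ≤ m * i := Nat.le_mul_of_pos_left i hm
        omega
      rw [h2, Function.iterate_add_apply] at h1
      rw [← h1]
      exact psi_iterate_mem_orb hi _
  · -- orbit points are periodic
    intro v hv
    have hcard : Fintype.card (Fin n) < Fintype.card (Fin (n + 1)) := by simp
    obtain ⟨a, c, hne, heq⟩ :=
      Fintype.exists_ne_map_eq_of_card_lt (fun i : Fin (n + 1) => (psi p b)^[(i : ℕ)] v) hcard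
    -- heq is already in usable form
    have main : ∀ (a c : ℕ), a < c → (psi p b)^[a] v = (psi p b)^[c] v → v ∈ per (psi p b) := by
      intro a c hlt heq'
      have h1 : (psi p b)^[a] ((psi p b)^[c - a] v) = (psi p b)^[a] v := by
        rw [← Function.iterate_add_apply]
        have : a + (c - a) = c := by omega
        rw [this, heq']
      have h2 : (psi p b)^[c - a] v = v :=
        psi_iterate_cancel h a _ _ (psi_iterate_mem_orb hv _) hv h1
      exact mem_per.2 ⟨c - a, by omega, h2⟩
    rcases Ne.lt_or_gt hne with hlt | hlt
    · exact main a c hlt heq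
    · exact main c a hlt heq.symm

/-- Injectivity of the Joyal map. -/
lemma psi_inj {p p' : Fin n → Fin n} {r r' b b' : Fin n}
    (hp : IsTF p r) (hp' : IsTF p' r') (heq : psi p b = psi p' b') :
    p = p' ∧ r = r' ∧ b = b' := by
  have horb : orb p b = orb p' b' := by
    rw [← per_psi hp b, ← per_psi hp' b', heq]
  set l := (orb p b).sort (· ≤ ·) with hl
  have hlen : l.length = tdepth p r b + 1 := by
    rw [hl, Finset.length_sort, hp.card_orb]
  have hlen' : l.length = tdepth p' r' b' + 1 := by
    rw [hl, horb, Finset.length_sort, hp'.card_orb]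
  have hkey : ∀ i (hi : i < l.length), p^[i] b = p'^[i] b' := by
    intro i hi
    have h1 : psi p b (l[i]) = p^[i] b := psi_apply_getElem hi
    have h2 : psi p' b' (l[i]) = p'^[i] b' := by
      have hi' : i < ((orb p' b').sort (· ≤ ·)).length := by rw [← horb]; exact hi
      have := psi_apply_getElem (p := p') (b := b') hi'
      convert this using 3 <;> rw [hl, horb]
    rw [← h1, ← h2, heq]
  have hlpos : 0 < l.length := by omega
  have hb : b = b' := by
    have := hkey 0 hlpos
    simpa using this
  have hr : r = r' := by
    have h1 := hkey (tdepth p r b) (by omega)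
    have h2 : tdepth p' r' b' = tdepth p r b := by omega
    rw [← hp.iterate_tdepth b, h1, ← h2, hp'.iterate_tdepth b']
  refine ⟨?_, hr, hb⟩
  funext v
  by_cases hv : v ∈ orb p b
  · rw [hp.orb_eq_image b] at hv
    obtain ⟨i, hi, rfl⟩ := Finset.mem_image.1 hv
    rw [Finset.mem_range] at hi
    rcases Nat.lt_or_ge i (tdepth p r b) with hid | hid
    · have e1 : p (p^[i] b) = p^[i + 1] b := (Function.iterate_succ_apply' p i b).symm
      have e2 : p^[i] b = p'^[i] b' := hkey i (by omega)
      have e3 : p^[i + 1] b = p'^[i + 1] b' := hkey (i + 1) (by omega)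
      rw [e1, e3, e2, Function.iterate_succ_apply' p' i b']
    · have hieq : i = tdepth p r b := by omega
      have e2 : p^[i] b = p'^[i] b' := hkey i (by omega)
      have hvr : p^[i] b = r := by rw [hieq]; exact hp.iterate_tdepth b
      have hvr' : p'^[i] b' = r' := by
        have h2' : tdepth p' r' b' = i := by omega
        rw [← h2']; exact hp'.iterate_tdepth b'
      calc p (p^[i] b) = p r := by rw [hvr]
        _ = r := hp.1
        _ = p^[i] b := hvr.symm
        _ = p'^[i] b' := e2
        _ = r' := hvr'
        _ = p' r' := (hp'.1).symm
        _ = p' (p'^[i] b') := by rw [hvr']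
        _ = p' (p^[i] b) := by rw [e2]
  · have hv' : v ∉ orb p' b' := by rwa [← horb]
    rw [← psi_apply_not_mem (p := p) (b := b) hv, heq, psi_apply_not_mem hv']

/-- Surjectivity of the Joyal map. -/
lemma psi_surj (hn : 1 ≤ n) (f : Fin n → Fin n) :
    ∃ p r b, IsTF p r ∧ psi p b = f := by
  classical
  set l1 := (per f).sort (· ≤ ·) with hl1
  set l2 := l1.map f with hl2
  have hlen12 : l2.length = l1.length := by simp [hl2]
  have hl1card : l1.length = (per f).card := Finset.length_sort _
  set K := l2.length with hK
  have hkpos : 0 < K := by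
    rw [hlen12, hl1card]
    exact Finset.card_pos.2 (per_nonempty f hn)
  have hl1nodup : l1.Nodup := Finset.sort_nodup _ _
  have hl2nodup : l2.Nodup := by
    refine List.Nodup.map_on ?_ hl1nodup
    intro x hx y hy hxy
    exact per_injOn ((Finset.mem_sort _).1 hx) ((Finset.mem_sort _).1 hy) hxy
  have hl2sub : ∀ x ∈ l2, x ∈ per f := by
    intro x hx
    obtain ⟨y, hy, rfl⟩ := List.mem_map.1 hx
    exact per_closed ((Finset.mem_sort _).1 hy)
  have hl2mem : ∀ x, x ∈ l2 ↔ x ∈ per f := by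
    have hsub : l2.toFinset ⊆ per f := fun x hx => hl2sub x (List.mem_toFinset.1 hx)
    have hcard : (per f).card ≤ l2.toFinset.card := by
      rw [List.toFinset_card_of_nodup hl2nodup, ← hK, hlen12, hl1card]
    have heq : l2.toFinset = per f := Finset.eq_of_subset_of_card_le hsub hcard
    intro x
    rw [← heq, List.mem_toFinset]
  set r := l2[K-1]'(by omega) with hr
  set b := l2[0]'hkpos with hb
  set p : Fin n → Fin n := fun v =>
    if hv : v ∈ l2 then
      (if hj : l2.idxOf v + 1 < K then l2[l2.idxOf v + 1]'hj else v)
    else f v with hp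
  have F1 : ∀ i (hi : i < K) (hi1 : i + 1 < K), p (l2[i]'hi) = l2[i+1]'hi1 := by
    intro i hi hi1
    simp only [hp]
    rw [dif_pos (List.getElem_mem hi)]
    simp only [List.Nodup.idxOf_getElem hl2nodup i hi]
    rw [dif_pos hi1]
  have F2 : p r = r := by
    simp only [hp, hr]
    rw [dif_pos (List.getElem_mem (by omega))]
    simp only [List.Nodup.idxOf_getElem hl2nodup (K-1) (by omega)]
    rw [dif_neg (by omega)]
  have F3 : ∀ i (hi : i < K), p^[i] b = l2[i]'hi := by
    intro i
    induction i with
    | zero => intro hi; simp [hb]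
    | succ i ih =>
      intro hi
      rw [Function.iterate_succ_apply', ih (by omega), F1 i (by omega) hi]
  have F4 : ∀ m i (hi : i < K), i + m = K - 1 → p^[m] (l2[i]'hi) = r := by
    intro m
    induction m with
    | zero =>
      intro i hi heq
      have hieq : i = K - 1 := by omega
      subst hieq
      simp only [Function.iterate_zero_apply, hr]
    | succ m ih =>
      intro i hi heq
      rw [Function.iterate_succ_apply, F1 i hi (by omega)]
      exact ih (i+1) (by omega) (by omega)
  have reachS : ∀ v, v ∈ per f → ∃ m, p^[m] v = r := by
    intro v hv
    have hvl2 : v ∈ l2 := (hl2mem v).2 hv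
    have hidx : l2.idxOf v < K := List.idxOf_lt_length_iff.2 hvl2
    refine ⟨K - 1 - l2.idxOf v, ?_⟩
    have := F4 (K - 1 - l2.idxOf v) (l2.idxOf v) hidx (by omega)
    rwa [List.getElem_idxOf hidx] at this
  have F5 : ∀ j v, f^[j] v ∈ per f → ∃ m, p^[m] v = r := by
    intro j
    induction j with
    | zero =>
      intro v hv
      exact reachS v (by simpa using hv)
    | succ j ih =>
      intro v hv
      by_cases hvp : v ∈ per f
      · exact reachS v hvp
      · have hvl2 : v ∉ l2 := fun h => hvp ((hl2mem v).1 h)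
        have hpv : p v = f v := by simp only [hp]; rw [dif_neg hvl2]
        have hiter : f^[j] (f v) ∈ per f := by
          rwa [← Function.iterate_succ_apply]
        obtain ⟨m, hm⟩ := ih (f v) hiter
        exact ⟨m + 1, by rw [Function.iterate_succ_apply, hpv, hm]⟩
  have htf : IsTF p r := by
    refine ⟨F2, fun v => ?_⟩
    obtain ⟨j, hj⟩ := exists_iterate_mem_per f v
    exact F5 j v hj
  have F6 : orb p b = per f := by
    apply Finset.Subset.antisymm
    · intro w hw
      obtain ⟨i, rfl⟩ := mem_orb.1 hw
      rcases Nat.lt_or_ge i K with hi | hi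
      · rw [F3 i hi]; exact (hl2mem _).1 (List.getElem_mem hi)
      · have h1 : p^[i] b = p^[i - (K-1)] (p^[K-1] b) := by
          rw [← Function.iterate_add_apply]; congr 1; omega
        rw [h1, F3 (K-1) (by omega)]
        have h2 : (l2[K-1]'(by omega)) = r := rfl
        rw [h2, htf.iter_root]
        exact (hl2mem r).1 (List.getElem_mem (by omega))
    · intro w hw
      have hwl : w ∈ l2 := (hl2mem w).2 hw
      have hidx : l2.idxOf w < K := List.idxOf_lt_length_iff.2 hwl
      rw [mem_orb]
      exact ⟨l2.idxOf w, by rw [F3 _ hidx, List.getElem_idxOf hidx]⟩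
  refine ⟨p, r, b, htf, ?_⟩
  funext v
  by_cases hv : v ∈ orb p b
  · have hvs : v ∈ per f := F6 ▸ hv
    have hvl1 : v ∈ l1 := (Finset.mem_sort _).2 hvs
    have hidx : l1.idxOf v < l1.length := List.idxOf_lt_length_iff.2 hvl1
    have hsort : (orb p b).sort (· ≤ ·) = l1 := by rw [F6, hl1]
    rw [psi, if_pos hv]
    simp only [hsort]
    rw [F3 (l1.idxOf v) (by omega)]
    have hmap : l2[l1.idxOf v]'(by omega) = f (l1[l1.idxOf v]'hidx) := by
      simp only [hl2]
      rw [List.getElem_map]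
    rw [hmap, List.getElem_idxOf hidx]
  · have hvl2 : v ∉ l2 := fun h => hv (F6 ▸ (hl2mem v).1 h)
    rw [psi_apply_not_mem hv]
    simp only [hp]; rw [dif_neg hvl2]
/-! ### Counting tree functions -/

/-- Parent functions with roots: these encode rooted labeled trees. -/
def TreeFun (n : ℕ) : Type := {q : (Fin n → Fin n) × Fin n // IsTF q.1 q.2}

/-- Joyal's bijection. -/
noncomputable def joyal (hn : 1 ≤ n) : TreeFun n × Fin n ≃ (Fin n → Fin n) := by
  refine Equiv.ofBijective (fun x => psi x.1.1.1 x.2) ⟨?_, ?_⟩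
  · rintro ⟨⟨⟨p, r⟩, hpr⟩, b⟩ ⟨⟨⟨p', r'⟩, hpr'⟩, b'⟩ heq
    obtain ⟨h1, h2, h3⟩ := psi_inj hpr hpr' heq
    subst h1; subst h2; subst h3; rfl
  · intro f
    obtain ⟨p, r, b, htf, hpsi⟩ := psi_surj hn f
    exact ⟨⟨⟨⟨p, r⟩, htf⟩, b⟩, hpsi⟩

lemma card_treeFun (hn : 1 ≤ n) : Nat.card (TreeFun n) = n ^ (n - 1) := by
  have h1 : Nat.card (TreeFun n × Fin n) = Nat.card (Fin n → Fin n) :=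
    Nat.card_congr (joyal hn)
  have hfin : Nat.card (Fin n) = n := by simp
  rw [Nat.card_prod, Nat.card_fun, hfin] at h1
  have h2 : n ^ n = n ^ (n - 1) * n := by
    rw [← pow_succ]
    congr 1
    omega
  rw [h2] at h1
  exact Nat.eq_of_mul_eq_mul_right (by omega) h1
/-! ### From codes to ditrees -/

/-- The arc relation determined by a code `(p, r, o)`. -/
def arcC (p : Fin n → Fin n) (r : Fin n) (o : Fin n → Bool) (v w : Fin n) : Bool :=
  decide ((w = p v ∧ v ≠ r ∧ o v = true) ∨ (v = p w ∧ w ≠ r ∧ o w = false))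

lemma arcC_iff {p : Fin n → Fin n} {r : Fin n} {o : Fin n → Bool} {v w : Fin n} :
    arcC p r o v w = true ↔
      ((w = p v ∧ v ≠ r ∧ o v = true) ∨ (v = p w ∧ w ≠ r ∧ o w = false)) :=
  decide_eq_true_iff

section CodeWorld

variable {p : Fin n → Fin n} {r : Fin n} {o : Fin n → Bool}

lemma IsTF.no2cycle (htf : IsTF p r) {v : Fin n} (h : p (p v) = v) : v = r :=
  htf.eq_root_of_periodic (m := 2) (by omega) (by simpa [Function.iterate_succ_apply'] using h)

lemma IsTF.parent_ne (htf : IsTF p r) {v : Fin n} (hv : v ≠ r) : p v ≠ v := by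
  intro h
  exact hv (htf.eq_root_of_periodic (m := 1) le_rfl (by simpa using h))

lemma arcC_loopless (htf : IsTF p r) (v : Fin n) : arcC p r o v v = false := by
  rw [Bool.eq_false_iff]
  intro h
  rcases arcC_iff.1 h with ⟨h1, h2, _⟩ | ⟨h1, h2, _⟩ <;>
    exact htf.parent_ne h2 h1.symm

lemma arcC_oneWay (htf : IsTF p r) (v w : Fin n) (h : arcC p r o v w = true) :
    arcC p r o w v = false := by
  rw [Bool.eq_false_iff]
  intro h'
  rcases arcC_iff.1 h with ⟨h1, h2, h3⟩ | ⟨h1, h2, h3⟩ <;>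
    rcases arcC_iff.1 h' with ⟨h1', h2', h3'⟩ | ⟨h1', h2', h3'⟩
  · exact h2 (htf.no2cycle (by rw [← h1, ← h1']))
  · rw [h3'] at h3; exact absurd h3 (by simp)
  · rw [h3] at h3'; exact absurd h3' (by simp)
  · exact h2' (htf.no2cycle (by rw [← h1', ← h1]))

/-- The underlying graph of a code. -/
abbrev codeGraph (p : Fin n → Fin n) (r : Fin n) (o : Fin n → Bool) : SimpleGraph (Fin n) :=
  SimpleGraph.fromRel fun v w => arcC p r o v w = true

lemma codeGraph_adj_parent (htf : IsTF p r) {v : Fin n} (hv : v ≠ r) :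
    (codeGraph p r o).Adj v (p v) := by
  rw [SimpleGraph.fromRel_adj]
  refine ⟨fun h => htf.parent_ne hv h.symm, ?_⟩
  cases ho : o v
  · right
    exact arcC_iff.2 (Or.inr ⟨rfl, hv, ho⟩)
  · left
    exact arcC_iff.2 (Or.inl ⟨rfl, hv, ho⟩)

lemma codeGraph_adj_char (htf : IsTF p r) {a b : Fin n}
    (h : (codeGraph p r o).Adj a b) : (b = p a ∧ a ≠ r) ∨ (a = p b ∧ b ≠ r) := by
  rw [SimpleGraph.fromRel_adj] at h
  rcases h.2 with h' | h'
  · rcases arcC_iff.1 h' with ⟨h1, h2, _⟩ | ⟨h1, h2, _⟩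
    · exact Or.inl ⟨h1, h2⟩
    · exact Or.inr ⟨h1, h2⟩
  · rcases arcC_iff.1 h' with ⟨h1, h2, _⟩ | ⟨h1, h2, _⟩
    · exact Or.inr ⟨h1, h2⟩
    · exact Or.inl ⟨h1, h2⟩

lemma codeGraph_reachable (htf : IsTF p r) (v : Fin n) :
    (codeGraph p r o).Reachable v r := by
  have key : ∀ k v, tdepth p r v ≤ k → (codeGraph p r o).Reachable v r := by
    intro k
    induction k with
    | zero =>
      intro v hk
      have : v = r := htf.tdepth_eq_zero.1 (by omega)
      rw [this]
    | succ k ih =>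
      intro v hk
      by_cases hv : v = r
      · rw [hv]
      · have h1 := htf.tdepth_parent hv
        exact ((codeGraph_adj_parent htf hv).reachable).trans (ih (p v) (by omega))
  exact key (tdepth p r v) v le_rfl

lemma codeGraph_connected (htf : IsTF p r) : (codeGraph p r o).Connected := by
  rw [SimpleGraph.connected_iff]
  exact ⟨fun a b => (codeGraph_reachable htf a).trans (codeGraph_reachable htf b).symm, ⟨r⟩⟩

/-- `Below v u` : `u` is an ancestor of `v` (or `v` itself). -/
def Below (p : Fin n → Fin n) (v u : Fin n) : Prop := ∃ i, p^[i] v = u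

lemma below_chain {v u : Fin n} : Below p v u ↔ u = v ∨ Below p (p v) u := by
  constructor
  · rintro ⟨i, rfl⟩
    cases i with
    | zero => exact Or.inl rfl
    | succ i => exact Or.inr ⟨i, by rw [← Function.iterate_succ_apply]⟩
  · rintro (rfl | ⟨i, rfl⟩)
    · exact ⟨0, rfl⟩
    · exact ⟨i + 1, by rw [Function.iterate_succ_apply]⟩

lemma below_self (v : Fin n) : Below p v v := ⟨0, rfl⟩

lemma not_below_parent (htf : IsTF p r) {v : Fin n} (hv : v ≠ r) : ¬ Below p (p v) v := by
  rintro ⟨i, hi⟩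
  exact hv (htf.eq_root_of_periodic (m := i + 1) (by omega)
    (by rwa [Function.iterate_succ_apply]))

lemma codeGraph_side_invariant (htf : IsTF p r) {u : Fin n}
    {a b : Fin n} (W : ((codeGraph p r o) \ SimpleGraph.fromEdgeSet {s(u, p u)}).Walk a b) :
    Below p a u ↔ Below p b u := by
  induction W with
  | nil => rfl
  | @cons a c b h q ih =>
    rw [SimpleGraph.sdiff_adj, SimpleGraph.fromEdgeSet_adj] at h
    obtain ⟨hG, hne⟩ := h
    have hac : a ≠ c := hG.ne
    have hedge : ¬ (s(a, c) = s(u, p u)) := fun hcontra => hne ⟨by simp [hcontra], hac⟩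
    have hstep : Below p a u ↔ Below p c u := by
      rcases codeGraph_adj_char htf hG with ⟨h1, h2⟩ | ⟨h1, h2⟩
      · -- c = p a
        have hau : a ≠ u := by
          rintro rfl
          exact hedge (by rw [h1])
        rw [below_chain (v := a)]
        simp only [← h1]
        constructor
        · rintro (rfl | hb)
          · exact absurd rfl hau
          · exact hb
        · exact Or.inr
      · -- a = p c
        have hcu : c ≠ u := by
          rintro rfl
          exact hedge (by rw [h1, Sym2.eq_swap])
        rw [below_chain (v := c)]
        simp only [← h1]
        constructor
        · exact Or.inr
        · rintro (rfl | hb)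
          · exact absurd rfl hcu
          · exact hb
    exact hstep.trans ih

lemma codeGraph_isBridge (htf : IsTF p r) {u : Fin n} (hu : u ≠ r) :
    (codeGraph p r o).IsBridge s(u, p u) := by
  rw [SimpleGraph.isBridge_iff]
  intro hreach
  obtain ⟨W⟩ := hreach
  have := codeGraph_side_invariant (o := o) htf W
  rw [iff_iff_implies_and_implies] at this
  exact not_below_parent htf hu (this.1 (below_self u))

lemma codeGraph_acyclic (htf : IsTF p r) : (codeGraph p r o).IsAcyclic := by
  rw [SimpleGraph.isAcyclic_iff_forall_edge_isBridge]
  intro e he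
  induction e with
  | h a b =>
    rw [SimpleGraph.mem_edgeSet] at he
    rcases codeGraph_adj_char htf he with ⟨h1, h2⟩ | ⟨h1, h2⟩
    · rw [h1]
      exact codeGraph_isBridge htf h2
    · rw [Sym2.eq_swap, h1]
      exact codeGraph_isBridge htf h2

/-- The rooted ditree associated to a code. -/
def codeToDitree (htf : IsTF p r) (o : Fin n → Bool) : RootedDitree n where
  arc := arcC p r o
  root := r
  loopless := arcC_loopless htf
  oneWay := arcC_oneWay htf
  tree := ⟨codeGraph_connected htf, codeGraph_acyclic htf⟩

end CodeWorld
/-! ### Canonical walks in a code graph -/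

section CodeWorld2

variable {p : Fin n → Fin n} {r : Fin n} {o : Fin n → Bool}

lemma codeGraph_canonical_walk (htf : IsTF p r) :
    ∀ k v, tdepth p r v ≤ k → ∃ W : (codeGraph p r o).Walk v r, W.IsPath ∧
      (∀ x ∈ W.support, Below p v x) ∧ (v ≠ r → W.getVert 1 = p v) := by
  intro k
  induction k with
  | zero =>
    intro v hk
    have hv : v = r := htf.tdepth_eq_zero.1 (by omega)
    subst hv
    refine ⟨SimpleGraph.Walk.nil, SimpleGraph.Walk.IsPath.nil, ?_, fun h => absurd rfl h⟩
    intro x hx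
    rw [SimpleGraph.Walk.support_nil, List.mem_singleton] at hx
    rw [hx]; exact below_self v
  | succ k ih =>
    intro v hk
    by_cases hv : v = r
    · subst hv
      refine ⟨SimpleGraph.Walk.nil, SimpleGraph.Walk.IsPath.nil, ?_, fun h => absurd rfl h⟩
      intro x hx
      rw [SimpleGraph.Walk.support_nil, List.mem_singleton] at hx
      rw [hx]; exact below_self v
    · have hd := htf.tdepth_parent hv
      obtain ⟨W', hW', hsup, _⟩ := ih (p v) (by omega)
      refine ⟨SimpleGraph.Walk.cons (codeGraph_adj_parent htf hv) W', ?_, ?_, ?_⟩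
      · rw [SimpleGraph.Walk.cons_isPath_iff]
        exact ⟨hW', fun hmem => not_below_parent htf hv (hsup v hmem)⟩
      · intro x hx
        rw [SimpleGraph.Walk.support_cons, List.mem_cons] at hx
        rcases hx with rfl | hx
        · exact below_self x
        · exact below_chain.2 (Or.inr (hsup x hx))
      · intro _
        rw [SimpleGraph.Walk.getVert_cons_succ, SimpleGraph.Walk.getVert_zero]

end CodeWorld2

/-! ### From ditrees to codes -/

/-- The underlying graph of a ditree. -/
abbrev dGraph (d : RootedDitree n) : SimpleGraph (Fin n) :=
  SimpleGraph.fromRel fun v w => d.arc v w = true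

/-- The unique path from `v` to the root. -/
noncomputable def dPath (d : RootedDitree n) (v : Fin n) : (dGraph d).Path v d.root :=
  ((d.tree.isConnected.preconnected v d.root).some).toPath

lemma dPath_unique (d : RootedDitree n) {v : Fin n} {q : (dGraph d).Walk v d.root}
    (hq : q.IsPath) : q = (dPath d v).1 :=
  congrArg Subtype.val (d.tree.IsAcyclic.path_unique ⟨q, hq⟩ (dPath d v))

/-- The parent function of a ditree. -/
noncomputable def dParent (d : RootedDitree n) (v : Fin n) : Fin n :=
  if v = d.root then v else ((dPath d v).1.getVert 1)

lemma walk_cases {V : Type*} {G : SimpleGraph V} {v ρ : V} (W : G.Walk v ρ) (hW : W.IsPath)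
    (hv : v ≠ ρ) :
    ∃ (_ : G.Adj v (W.getVert 1)) (q : G.Walk (W.getVert 1) ρ),
      q.IsPath ∧ q.length + 1 = W.length ∧ v ∉ q.support := by
  cases W with
  | nil => exact absurd rfl hv
  | @cons _ u _ h q =>
    have hu : (SimpleGraph.Walk.cons h q).getVert 1 = u := by
      rw [SimpleGraph.Walk.getVert_cons_succ, SimpleGraph.Walk.getVert_zero]
    rw [SimpleGraph.Walk.cons_isPath_iff] at hW
    rw [hu]
    exact ⟨h, q, hW.1, by simp [SimpleGraph.Walk.length_cons], hW.2⟩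

lemma dParent_spec (d : RootedDitree n) {v : Fin n} (hv : v ≠ d.root) :
    (dGraph d).Adj v (dParent d v) ∧
      (dPath d (dParent d v)).1.length + 1 = (dPath d v).1.length := by
  obtain ⟨h, q, hq, hlen, _⟩ := walk_cases (dPath d v).1 (dPath d v).2 hv
  have hp : dParent d v = (dPath d v).1.getVert 1 := if_neg hv
  have hqeq : q = (dPath d ((dPath d v).1.getVert 1)).1 := dPath_unique d hq
  rw [hp]
  exact ⟨h, by rw [← hqeq]; exact hlen⟩

lemma dParent_isTF (d : RootedDitree n) : IsTF (dParent d) d.root := by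
  constructor
  · simp [dParent]
  · intro v
    have key : ∀ k v, (dPath d v).1.length ≤ k → ∃ m, (dParent d)^[m] v = d.root := by
      intro k
      induction k with
      | zero =>
        intro v hk
        by_cases hv : v = d.root
        · exact ⟨0, hv⟩
        · have := (dParent_spec d hv).2
          omega
      | succ k ih =>
        intro v hk
        by_cases hv : v = d.root
        · exact ⟨0, hv⟩
        · have hlen := (dParent_spec d hv).2
          obtain ⟨m, hm⟩ := ih (dParent d v) (by omega)
          exact ⟨m + 1, by rw [Function.iterate_succ_apply, hm]⟩
    exact key _ v le_rfl

lemma dPath_root_nil (d : RootedDitree n) :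
    (dPath d d.root).1 = SimpleGraph.Walk.nil :=
  (dPath_unique d SimpleGraph.Walk.IsPath.nil).symm

lemma dAdj_char (d : RootedDitree n) {a b : Fin n} (h : (dGraph d).Adj a b) :
    b = dParent d a ∨ a = dParent d b := by
  classical
  have hab : a ≠ b := h.ne
  by_cases hmem : b ∈ (dPath d a).1.support
  · left
    have haroot : a ≠ d.root := by
      rintro rfl
      rw [dPath_root_nil d, SimpleGraph.Walk.support_nil, List.mem_singleton] at hmem
      exact hab hmem.symm
    have hp1 : ((dPath d a).1.takeUntil b hmem).IsPath := (dPath d a).2.takeUntil hmem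
    have hp2 : (SimpleGraph.Walk.cons h SimpleGraph.Walk.nil).IsPath := by
      rw [SimpleGraph.Walk.cons_isPath_iff]
      exact ⟨SimpleGraph.Walk.IsPath.nil, by simp [hab]⟩
    have htake : (dPath d a).1.takeUntil b hmem = SimpleGraph.Walk.cons h SimpleGraph.Walk.nil :=
      congrArg Subtype.val (d.tree.IsAcyclic.path_unique ⟨_, hp1⟩ ⟨_, hp2⟩)
    have hspec := (dPath d a).1.take_spec hmem
    rw [htake] at hspec
    have hgv : (dPath d a).1.getVert 1 = b := by
      rw [← hspec, SimpleGraph.Walk.cons_append, SimpleGraph.Walk.getVert_cons_succ,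
        SimpleGraph.Walk.getVert_zero]
    rw [dParent, if_neg haroot, hgv]
  · right
    have hW : (SimpleGraph.Walk.cons h.symm (dPath d a).1).IsPath := by
      rw [SimpleGraph.Walk.cons_isPath_iff]
      exact ⟨(dPath d a).2, hmem⟩
    have hbroot : b ≠ d.root := by
      rintro rfl
      have huniq := dPath_unique d hW
      rw [dPath_root_nil d] at huniq
      cases huniq
    have huniq := dPath_unique d hW
    rw [dParent, if_neg hbroot, ← huniq, SimpleGraph.Walk.getVert_cons_succ,
      SimpleGraph.Walk.getVert_zero]

/-- Flat codes. -/
def CodeS (n : ℕ) : Type := {x : ((Fin n → Fin n) × Fin n) × (Fin n → Bool) //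
  IsTF x.1.1 x.1.2 ∧ x.2 x.1.2 = false}
/-! ### The equivalence between ditrees and codes -/

lemma RootedDitree.ext' {d1 d2 : RootedDitree n} (h1 : d1.arc = d2.arc)
    (h2 : d1.root = d2.root) : d1 = d2 := by
  cases d1; cases d2
  simp only at h1 h2
  subst h1; subst h2
  rfl

section CodeWorld3

variable {p : Fin n → Fin n} {r : Fin n} {o : Fin n → Bool}

lemma arcC_parent (htf : IsTF p r) {v : Fin n} (hv : v ≠ r) :
    arcC p r o v (p v) = o v := by
  cases ho : o v
  · rw [Bool.eq_false_iff]
    intro h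
    rcases arcC_iff.1 h with ⟨_, _, h3⟩ | ⟨h1, _, _⟩
    · rw [ho] at h3; exact absurd h3 (by simp)
    · exact hv (htf.no2cycle h1.symm)
  · exact arcC_iff.2 (Or.inl ⟨rfl, hv, ho⟩)

lemma dParent_codeToDitree (htf : IsTF p r) (o : Fin n → Bool) :
    dParent (codeToDitree htf o) = p := by
  funext v
  by_cases hv : v = r
  · have hroot : dParent (codeToDitree htf o) v = v := by
      rw [dParent]; exact if_pos hv
    rw [hroot, hv, htf.1]
  · obtain ⟨W, hW, _, hgv⟩ :=
      codeGraph_canonical_walk (o := o) htf (tdepth p r v) v le_rfl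
    have huniq : W = (dPath (codeToDitree htf o) v).1 :=
      dPath_unique (d := codeToDitree htf o) hW
    rw [dParent, if_neg (show ¬ v = (codeToDitree htf o).root from hv), ← huniq]
    exact hgv hv

lemma o_codeToDitree (htf : IsTF p r) (ho : o r = false) :
    (fun v => (codeToDitree htf o).arc v (dParent (codeToDitree htf o) v)) = o := by
  rw [dParent_codeToDitree htf o]
  funext v
  show arcC p r o v (p v) = o v
  by_cases hv : v = r
  · rw [hv, htf.1, arcC_loopless htf, ho]
  · exact arcC_parent htf hv

end CodeWorld3

lemma arc_eq_arcC (d : RootedDitree n) :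
    arcC (dParent d) d.root (fun v => d.arc v (dParent d v)) = d.arc := by
  funext a b
  by_cases hdb : d.arc a b = true
  · rw [hdb]
    have hne : a ≠ b := by
      rintro rfl
      rw [d.loopless a] at hdb
      exact absurd hdb (by simp)
    have hAdj : (dGraph d).Adj a b := (SimpleGraph.fromRel_adj _ a b).2 ⟨hne, Or.inl hdb⟩
    rcases dAdj_char d hAdj with h1 | h1
    · have haroot : a ≠ d.root := by
        rintro rfl
        rw [dParent, if_pos rfl] at h1
        exact hne h1.symm
      refine arcC_iff.2 (Or.inl ⟨h1, haroot, ?_⟩)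
      rw [← h1]; exact hdb
    · have hbroot : b ≠ d.root := by
        rintro rfl
        rw [dParent, if_pos rfl] at h1
        exact hne h1
      refine arcC_iff.2 (Or.inr ⟨h1, hbroot, ?_⟩)
      rw [← h1]
      exact d.oneWay a b hdb
  · have hdb' : d.arc a b = false := by
      cases h : d.arc a b
      · rfl
      · exact absurd h hdb
    rw [hdb', Bool.eq_false_iff]
    intro harcC
    rcases arcC_iff.1 harcC with ⟨h1, h2, h3⟩ | ⟨h1, h2, h3⟩
    · rw [← h1] at h3
      exact hdb h3
    · have hAdj := (dParent_spec d h2).1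
      rw [SimpleGraph.fromRel_adj] at hAdj
      rcases hAdj.2 with h4 | h4
      · rw [← h1] at h4 h3
        rw [h3] at h4
        exact absurd h4 (by simp)
      · rw [← h1] at h4
        exact hdb h4

/-- The equivalence between rooted ditrees and codes. -/
noncomputable def ditreeEquivCode : RootedDitree n ≃ CodeS n where
  toFun d := ⟨((dParent d, d.root), fun v => d.arc v (dParent d v)),
    dParent_isTF d, by
      have hroot : dParent d d.root = d.root := by rw [dParent]; exact if_pos rfl
      show d.arc d.root (dParent d d.root) = false
      rw [hroot]; exact d.loopless d.root⟩
  invFun c := codeToDitree (p := c.1.1.1) (r := c.1.1.2) c.2.1 c.1.2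
  left_inv d := by
    apply RootedDitree.ext'
    · exact arc_eq_arcC d
    · rfl
  right_inv c := by
    obtain ⟨⟨⟨p, r⟩, o⟩, htf, ho⟩ := c
    apply Subtype.ext
    simp only
    have h1 := dParent_codeToDitree htf o
    have h2 := o_codeToDitree htf ho
    rw [Prod.mk.injEq, Prod.mk.injEq]
    exact ⟨⟨h1, rfl⟩, h2⟩
/-! ### The unique kernel (well-coloring) of a ditree -/

open Classical in
/-- The set of non-root vertices whose edge points towards `x`. -/
noncomputable def Aset (p : Fin n → Fin n) (r : Fin n) (o : Fin n → Bool) (x : Fin n) :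
    Finset (Fin n) :=
  Finset.univ.filter
    (fun u => u ≠ r ∧ ((o u = true ∧ ¬ Below p x u) ∨ (o u = false ∧ Below p x u)))

lemma mem_Aset {p : Fin n → Fin n} {r : Fin n} {o : Fin n → Bool} {x u : Fin n} :
    u ∈ Aset p r o x ↔
      u ≠ r ∧ ((o u = true ∧ ¬ Below p x u) ∨ (o u = false ∧ Below p x u)) := by
  simp [Aset]

lemma phi_step {p : Fin n → Fin n} {r : Fin n} {o : Fin n → Bool} (htf : IsTF p r)
    {v w : Fin n} (h : arcC p r o v w = true) :
    (Aset p r o w).card = (Aset p r o v).card + 1 := by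
  rcases arcC_iff.1 h with ⟨h1, h2, h3⟩ | ⟨h1, h2, h3⟩
  · -- w = p v, arc points from v up to its parent
    subst h1
    have hnotv : v ∉ Aset p r o v := by
      rw [mem_Aset]
      rintro ⟨_, ⟨_, hb⟩ | ⟨ho, _⟩⟩
      · exact hb (below_self v)
      · rw [h3] at ho; exact absurd ho (by simp)
    have hinw : v ∈ Aset p r o (p v) :=
      mem_Aset.2 ⟨h2, Or.inl ⟨h3, not_below_parent htf h2⟩⟩
    have hset : Aset p r o (p v) = insert v (Aset p r o v) := by
      ext u
      rw [Finset.mem_insert, mem_Aset, mem_Aset]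
      by_cases hu : u = v
      · subst hu
        constructor
        · intro _
          exact Or.inl rfl
        · intro _
          exact mem_Aset.1 hinw
      · have hbelow : Below p v u ↔ Below p (p v) u := by
          rw [below_chain (v := v)]
          constructor
          · rintro (rfl | hb)
            · exact absurd rfl hu
            · exact hb
          · exact Or.inr
        constructor
        · rintro ⟨hur, hcase⟩
          refine Or.inr ⟨hur, ?_⟩
          rcases hcase with ⟨ho, hb⟩ | ⟨ho, hb⟩
          · exact Or.inl ⟨ho, fun hb' => hb (hbelow.1 hb')⟩
          · exact Or.inr ⟨ho, hbelow.2 hb⟩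
        · rintro (rfl | ⟨hur, hcase⟩)
          · exact absurd rfl hu
          refine ⟨hur, ?_⟩
          rcases hcase with ⟨ho, hb⟩ | ⟨ho, hb⟩
          · exact Or.inl ⟨ho, fun hb' => hb (hbelow.2 hb')⟩
          · exact Or.inr ⟨ho, hbelow.1 hb⟩
    rw [hset, Finset.card_insert_of_notMem hnotv]
  · -- v = p w, arc points from the parent v down to w
    subst h1
    have hinw : w ∈ Aset p r o w :=
      mem_Aset.2 ⟨h2, Or.inr ⟨h3, below_self w⟩⟩
    have hnotv : w ∉ Aset p r o (p w) := by
      rw [mem_Aset]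
      rintro ⟨_, ⟨ho, _⟩ | ⟨_, hb⟩⟩
      · rw [h3] at ho; exact absurd ho (by simp)
      · exact not_below_parent htf h2 hb
    have hset : Aset p r o w = insert w (Aset p r o (p w)) := by
      ext u
      rw [Finset.mem_insert, mem_Aset, mem_Aset]
      by_cases hu : u = w
      · subst hu
        constructor
        · intro _
          exact Or.inl rfl
        · intro _
          exact mem_Aset.1 hinw
      · have hbelow : Below p w u ↔ Below p (p w) u := by
          rw [below_chain (v := w)]
          constructor
          · rintro (rfl | hb)
            · exact absurd rfl hu
            · exact hb
          · exact Or.inr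
        constructor
        · rintro ⟨hur, hcase⟩
          refine Or.inr ⟨hur, ?_⟩
          rcases hcase with ⟨ho, hb⟩ | ⟨ho, hb⟩
          · exact Or.inl ⟨ho, fun hb' => hb (hbelow.2 hb')⟩
          · exact Or.inr ⟨ho, hbelow.1 hb⟩
        · rintro (rfl | ⟨hur, hcase⟩)
          · exact absurd rfl hu
          refine ⟨hur, ?_⟩
          rcases hcase with ⟨ho, hb⟩ | ⟨ho, hb⟩
          · exact Or.inl ⟨ho, fun hb' => hb (hbelow.1 hb')⟩
          · exact Or.inr ⟨ho, hbelow.2 hb⟩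
    rw [hset, Finset.card_insert_of_notMem hnotv]

lemma wfArc {p : Fin n → Fin n} {r : Fin n} {o : Fin n → Bool} (htf : IsTF p r) :
    WellFounded (fun w v => arcC p r o v w = true) := by
  have hsub : ∀ w v, arcC p r o v w = true →
      n - (Aset p r o w).card < n - (Aset p r o v).card := by
    intro w v h
    have h1 := phi_step htf h
    have h2 : (Aset p r o w).card ≤ n := by
      calc (Aset p r o w).card ≤ (Finset.univ : Finset (Fin n)).card := Finset.card_le_univ _
        _ = n := by simp
    omega
  exact Subrelation.wf (fun {w v} h => hsub w v h)
    (InvImage.wf (fun v => n - (Aset p r o v).card) Nat.lt_wfRel.wf)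

open Classical in
/-- The canonical kernel coloring. -/
noncomputable def kred {p : Fin n → Fin n} {r : Fin n} (htf : IsTF p r) (o : Fin n → Bool) :
    Fin n → Bool :=
  (wfArc (o := o) htf).fix
    (fun v IH => decide (∀ w (hw : arcC p r o v w = true), IH w hw = false))

lemma kred_eq {p : Fin n → Fin n} {r : Fin n} (htf : IsTF p r) (o : Fin n → Bool) (v : Fin n) :
    kred htf o v
      = decide (∀ w (_ : arcC p r o v w = true), kred htf o w = false) := by
  conv_lhs => rw [kred, WellFounded.fix_eq]
  rfl

lemma kred_true_iff {p : Fin n → Fin n} {r : Fin n} (htf : IsTF p r) (o : Fin n → Bool)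
    (v : Fin n) :
    kred htf o v = true ↔ ∀ w, arcC p r o v w = true → kred htf o w = false := by
  rw [kred_eq htf o v]
  classical
  rw [decide_eq_true_iff]

lemma kred_false_iff {p : Fin n → Fin n} {r : Fin n} (htf : IsTF p r) (o : Fin n → Bool)
    (v : Fin n) :
    kred htf o v = false ↔ ∃ w, arcC p r o v w = true ∧ kred htf o w = true := by
  constructor
  · intro h
    by_contra hc
    push_neg at hc
    have : kred htf o v = true := by
      rw [kred_true_iff]
      intro w hw
      have := hc w hw
      cases h' : kred htf o w
      · rfl
      · exact absurd h' this
    rw [this] at h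
    exact absurd h (by simp)
  · rintro ⟨w, hw, hred⟩
    cases h' : kred htf o v
    · rfl
    · have := (kred_true_iff htf o v).1 h' w hw
      rw [this] at hred
      exact absurd hred (by simp)

lemma kred_unique {p : Fin n → Fin n} {r : Fin n} (htf : IsTF p r) (o : Fin n → Bool)
    (red : Fin n → Bool)
    (g1 : ∀ v, red v = false → ∃ w, arcC p r o v w = true ∧ red w = true)
    (g2 : ∀ v w, red v = true → arcC p r o v w = true → red w = false) :
    red = kred htf o := by
  funext v
  refine (wfArc (o := o) htf).induction (C := fun v => red v = kred htf o v) v ?_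
  intro v IH
  cases hred : red v
  · obtain ⟨w, hw, hrw⟩ := g1 v hred
    have hk : kred htf o w = true := by rw [← IH w hw]; exact hrw
    symm
    rw [kred_false_iff]
    exact ⟨w, hw, hk⟩
  · symm
    rw [kred_true_iff]
    intro w hw
    rw [← IH w hw]
    exact g2 v w hred hw
/-! ### The equivalence between well-colored ditrees and ditrees -/

lemma WCRootedDitree.ext' {x y : WCRootedDitree n}
    (h1 : x.toRootedDitree = y.toRootedDitree) (h2 : x.red = y.red) : x = y := by
  cases x; cases y
  simp only at h1 h2
  subst h1; subst h2
  rfl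

lemma arcC_of_ditree (d : RootedDitree n) :
    arcC (ditreeEquivCode d).1.1.1 (ditreeEquivCode d).1.1.2 (ditreeEquivCode d).1.2
      = d.arc :=
  congrArg RootedDitree.arc ((ditreeEquivCode (n := n)).left_inv d)

/-- The canonical coloring of a ditree. -/
noncomputable def mkRed (d : RootedDitree n) : Fin n → Bool :=
  kred (ditreeEquivCode d).2.1 (ditreeEquivCode d).1.2

lemma mkRed_g1 (d : RootedDitree n) :
    ∀ v, mkRed d v = false → ∃ w, d.arc v w = true ∧ mkRed d w = true := by
  intro v hv
  rw [mkRed, kred_false_iff] at hv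
  obtain ⟨w, hw, hred⟩ := hv
  rw [arcC_of_ditree d] at hw
  exact ⟨w, hw, hred⟩

lemma mkRed_g2 (d : RootedDitree n) :
    ∀ v w, mkRed d v = true → d.arc v w = true → mkRed d w = false := by
  intro v w hv hw
  rw [mkRed, kred_true_iff] at hv
  exact hv w (by rw [arcC_of_ditree d]; exact hw)

lemma mkRed_unique (d : RootedDitree n) (red : Fin n → Bool)
    (g1 : ∀ v, red v = false → ∃ w, d.arc v w = true ∧ red w = true)
    (g2 : ∀ v w, red v = true → d.arc v w = true → red w = false) :
    red = mkRed d := by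
  rw [mkRed]
  apply kred_unique
  · intro v hv
    obtain ⟨w, hw, hred⟩ := g1 v hv
    exact ⟨w, by rw [arcC_of_ditree d]; exact hw, hred⟩
  · intro v w hv hw
    rw [arcC_of_ditree d] at hw
    exact g2 v w hv hw

/-- Forgetting the coloring is a bijection. -/
noncomputable def wcEquiv : WCRootedDitree n ≃ RootedDitree n where
  toFun x := x.toRootedDitree
  invFun d :=
    { toRootedDitree := d
      red := mkRed d
      greenRedChild := mkRed_g1 d
      redNoRedChild := mkRed_g2 d }
  left_inv x := by
    apply WCRootedDitree.ext'
    · rfl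
    · exact (mkRed_unique x.toRootedDitree x.red x.greenRedChild x.redNoRedChild).symm
  right_inv d := rfl

/-! ### Counting codes -/

def codeSEquivSigma : CodeS n ≃ Σ t : TreeFun n, {o : Fin n → Bool // o t.1.2 = false} where
  toFun x := ⟨⟨x.1.1, x.2.1⟩, ⟨x.1.2, x.2.2⟩⟩
  invFun y := ⟨(y.1.1, y.2.1), y.1.2, y.2.2⟩
  left_inv x := rfl
  right_inv y := rfl

def boolFiberEquiv (r : Fin n) :
    {o : Fin n → Bool // o r = false} ≃ ({v : Fin n // v ≠ r} → Bool) where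
  toFun o v := o.1 v.1
  invFun g := ⟨fun v => if h : v = r then false else g ⟨v, h⟩, by simp⟩
  left_inv o := by
    apply Subtype.ext
    funext v
    by_cases h : v = r
    · subst h
      simp [o.2]
    · simp [h]
  right_inv g := by
    funext v
    simp [v.2]

def neEquiv (r s : Fin n) : {v : Fin n // v ≠ r} ≃ {v : Fin n // v ≠ s} :=
  (Equiv.swap r s).subtypeEquiv (fun v =>
    ⟨fun hv hc => hv ((Equiv.swap r s).injective (by rw [hc, Equiv.swap_apply_left])),
     fun hv hc => hv (by rw [hc, Equiv.swap_apply_left])⟩)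

lemma card_codeS (hn : 1 ≤ n) : Nat.card (CodeS n) = n ^ (n - 1) * 2 ^ (n - 1) := by
  classical
  set r0 : Fin n := ⟨0, hn⟩
  have e1 : (Σ t : TreeFun n, {o : Fin n → Bool // o t.1.2 = false}) ≃
      (Σ _t : TreeFun n, ({v : Fin n // v ≠ r0} → Bool)) :=
    Equiv.sigmaCongrRight (fun t =>
      (boolFiberEquiv t.1.2).trans
        (Equiv.arrowCongr (neEquiv t.1.2 r0) (Equiv.refl Bool)))
  have e : CodeS n ≃ (TreeFun n × ({v : Fin n // v ≠ r0} → Bool)) :=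
    codeSEquivSigma.trans (e1.trans (Equiv.sigmaEquivProd _ _))
  rw [Nat.card_congr e, Nat.card_prod, card_treeFun hn, Nat.card_fun]
  congr 1
  have h1 : Nat.card Bool = 2 := by simp [Nat.card_eq_fintype_card]
  have h2 : Nat.card {v : Fin n // v ≠ r0} = n - 1 := by
    rw [Nat.card_eq_fintype_card]
    have := Fintype.card_subtype_compl (fun v : Fin n => v = r0)
    rw [Fintype.card_subtype_eq, Fintype.card_fin] at this
    exact this
  rw [h1, h2]

end WCD

/-- The number of well-colored rooted labeled ditrees on `n ≥ 1` vertices equals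
`(2n)^(n-1)`; equivalently the EGF `T(z)` of well-colored rooted labeled ditrees
satisfies `T(z) = C(2z)/2` where `C` is the Cayley tree function. -/
theorem stmt2 (n : ℕ) (hn : 1 ≤ n) :
    Nat.card (WCRootedDitree n) = (2 * n) ^ (n - 1) ∧
    (Nat.card (WCRootedDitree n) : ℝ) =
      (n.factorial : ℝ) *
        PowerSeries.coeff n ((1 / 2 : ℝ) • PowerSeries.rescale (2 : ℝ) cayley) := by
  have hcard : Nat.card (WCRootedDitree n) = (2 * n) ^ (n - 1) := by
    have h1 : Nat.card (WCRootedDitree n) = Nat.card (WCD.CodeS n) :=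
      Nat.card_congr ((WCD.wcEquiv).trans WCD.ditreeEquivCode)
    rw [h1, WCD.card_codeS hn, mul_pow]
    ring
  refine ⟨hcard, ?_⟩
  rw [hcard]
  have hco : (PowerSeries.coeff n) ((1 / 2 : ℝ) • PowerSeries.rescale (2 : ℝ) cayley)
      = (1 / 2 : ℝ) * ((2 : ℝ) ^ n *
          (if n = 0 then 0 else (n : ℝ) ^ (n - 1) / (n.factorial : ℝ))) := by
    rw [map_smul, smul_eq_mul, PowerSeries.coeff_rescale, cayley, PowerSeries.coeff_mk]
  rw [hco, if_neg (by omega : ¬ n = 0)]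
  have hne : (n.factorial : ℝ) ≠ 0 := Nat.cast_ne_zero.2 (Nat.factorial_ne_zero n)
  have h2 : (2 : ℝ) ^ n = 2 * 2 ^ (n - 1) := by
    rw [← pow_succ']
    congr 1
    omega
  push_cast
  rw [mul_pow, h2]
  field_simp
end

section
/- Let L(z) = −log(1 − z − z^2), a formal power series over the reals. Then for every n ≥ 1, the coefficient of z^n in L(z) equals (φ^n + (1−φ)^n)/n, where φ = (1+√5)/2; equivalently n!·[z^n]L(z) = (n−1)!·L_n where the Lucas numbers L_n satisfy L_{n+2} = L_{n+1} + L_n with L_1 = 1, L_2 = 3, and L_n = φ^n + (1−φ)^n. -/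
/-- `log(1+f)` for a formal power series `f` with zero constant term:
`log(1+f) = Σ_{k ≥ 1} (-1)^(k+1) f^k / k`. -/
noncomputable def log1p (f : PowerSeries ℝ) : PowerSeries ℝ :=
  PowerSeries.mk fun n =>
    ∑ k ∈ Finset.range (n + 1),
      (if k = 0 then 0 else (-1 : ℝ) ^ (k + 1) / (k : ℝ)) * PowerSeries.coeff (R := ℝ) n (f ^ k)

/-- `L(z) = -log(1 - z - z²)`, the EGF of possible well-colored circuits. -/
noncomputable def Lser : PowerSeries ℝ :=
  -log1p (-(PowerSeries.X + PowerSeries.X ^ 2))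

/-- The Lucas numbers: `L 0 = 2`, `L 1 = 1`, `L (n+2) = L (n+1) + L n`
(so `L 1 = 1`, `L 2 = 3`). -/
def lucas : ℕ → ℕ
  | 0 => 2
  | 1 => 1
  | n + 2 => lucas (n + 1) + lucas n

lemma coeff_one_add_X_pow (k m : ℕ) :
    PowerSeries.coeff (R := ℝ) m ((1 + PowerSeries.X) ^ k) = (k.choose m : ℝ) := by
  rw [add_comm, add_pow, map_sum]
  have : ∀ x ∈ Finset.range (k+1), PowerSeries.coeff (R := ℝ) m
      ((PowerSeries.X : PowerSeries ℝ) ^ x * 1 ^ (k - x) * (k.choose x : ℕ)) =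
      if m = x then (k.choose x : ℝ) else 0 := by
    intro x _
    rw [one_pow, mul_one, mul_comm, ← map_natCast (PowerSeries.C (R := ℝ)) (k.choose x),
      PowerSeries.coeff_C_mul, PowerSeries.coeff_X_pow]
    simp
  rw [Finset.sum_congr rfl this,
    Finset.sum_ite_eq (Finset.range (k+1)) m (fun i => ((k.choose i : ℝ)))]
  by_cases h : m ∈ Finset.range (k + 1)
  · simp [h]
  · rw [if_neg h]
    rw [Finset.mem_range, not_lt] at h
    simp [Nat.choose_eq_zero_of_lt h]

lemma coeff_XX2_pow (k n : ℕ) :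
    PowerSeries.coeff (R := ℝ) n ((PowerSeries.X + PowerSeries.X ^ 2 : PowerSeries ℝ) ^ k) =
      if k ≤ n then (k.choose (n - k) : ℝ) else 0 := by
  have h1 : (PowerSeries.X + PowerSeries.X ^ 2 : PowerSeries ℝ) ^ k =
      PowerSeries.X ^ k * (1 + PowerSeries.X) ^ k := by
    rw [← mul_pow]; ring_nf
  rw [h1, PowerSeries.coeff_X_pow_mul']
  split_ifs with h
  · exact coeff_one_add_X_pow k (n - k)
  · rfl

lemma coeff_Lser (n : ℕ) :
    PowerSeries.coeff (R := ℝ) n Lser =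
      ∑ k ∈ Finset.range (n + 1), (if k = 0 then 0 else (k.choose (n - k) : ℝ) / k) := by
  rw [Lser, map_neg, log1p, PowerSeries.coeff_mk, ← Finset.sum_neg_distrib]
  refine Finset.sum_congr rfl fun k hk => ?_
  rcases Nat.eq_zero_or_pos k with rfl | hkpos
  · simp
  have hkn : k ≤ n := Nat.lt_succ_iff.mp (Finset.mem_range.mp hk)
  rw [if_neg hkpos.ne', if_neg hkpos.ne']
  have : PowerSeries.coeff (R := ℝ) n ((-(PowerSeries.X + PowerSeries.X ^ 2) : PowerSeries ℝ) ^ k) =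
      (-1 : ℝ) ^ k * (k.choose (n - k) : ℝ) := by
    rw [neg_pow]
    have hC : ((-1 : PowerSeries ℝ)) ^ k = PowerSeries.C (R := ℝ) ((-1 : ℝ) ^ k) := by
      rw [map_pow, map_neg, map_one]
    rw [hC, PowerSeries.coeff_C_mul, coeff_XX2_pow, if_pos hkn]
  rw [this]
  have h2 : ((-1:ℝ))^(k+1) * (-1)^k = -1 := by
    rw [← pow_add]
    exact Odd.neg_one_pow ⟨k, by ring⟩
  have hk0 : (k : ℝ) ≠ 0 := Nat.cast_ne_zero.mpr hkpos.ne'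
  linear_combination (-((k.choose (n-k) : ℝ) / k)) * h2

lemma sum_choose_diag (n : ℕ) :
    ∑ k ∈ Finset.range (n + 1), (k.choose (n - k)) = Nat.fib (n + 1) := by
  rw [Nat.fib_succ_eq_sum_choose, Finset.Nat.sum_antidiagonal_eq_sum_range_succ_mk]

lemma lucas_eq_fib (n : ℕ) : lucas (n + 1) = Nat.fib (n + 2) + Nat.fib n := by
  induction n using Nat.twoStepInduction with
  | zero => simp [lucas]
  | one => simp [lucas, Nat.fib]
  | more n ih1 ih2 =>
    show lucas (n + 2) + lucas (n + 1) = _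
    rw [ih1, ih2, Nat.fib_add_two (n := n + 2), Nat.fib_add_two (n := n)]
    ring

open goldenRatio in
lemma lucas_gold (n : ℕ) : (lucas n : ℝ) = φ ^ n + ψ ^ n := by
  induction n using Nat.twoStepInduction with
  | zero => norm_num [lucas]
  | one => simpa [lucas] using (gold_add_goldConj).symm
  | more n ih1 ih2 =>
    show ((lucas (n + 1) + lucas n : ℕ) : ℝ) = _
    push_cast
    rw [ih1, ih2]
    linear_combination (φ ^ n) * Real.goldenRatio_sq + (ψ ^ n) * Real.goldenConj_sq - ((φ ^ n + ψ ^ n)/2) * (Real.sq_sqrt (by norm_num : (0:ℝ) ≤ 5))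

lemma key_sum (n : ℕ) (hn : 1 ≤ n) :
    ∑ k ∈ Finset.range (n + 1), (if k = 0 then 0 else (k.choose (n - k) : ℝ) / k) =
      (lucas n : ℝ) / n := by
  have hn0 : (n : ℝ) ≠ 0 := Nat.cast_ne_zero.mpr (by omega)
  have term : ∀ k ∈ Finset.range (n + 1),
      (n : ℝ) * (if k = 0 then 0 else (k.choose (n - k) : ℝ) / k) =
      (if k = 0 then 0 else (k.choose (n - k) : ℝ)) +
      (if 1 ≤ k ∧ k ≤ n - 1 then ((k - 1).choose (n - k - 1) : ℝ) else 0) := by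
    intro k hk
    rcases Nat.eq_zero_or_pos k with rfl | hkpos
    · simp
    have hkn : k ≤ n := Nat.lt_succ_iff.mp (Finset.mem_range.mp hk)
    rw [if_neg hkpos.ne', if_neg hkpos.ne']
    rcases eq_or_lt_of_le hkn with rfl | hlt
    · rw [if_neg (by omega), Nat.sub_self, Nat.choose_zero_right]
      field_simp
      simp
    · rw [if_pos ⟨hkpos, by omega⟩]
      have hnat : k * ((k - 1).choose (n - k - 1)) = (k.choose (n - k)) * (n - k) := by
        have h := Nat.add_one_mul_choose_eq (k - 1) (n - k - 1)
        rw [show k - 1 + 1 = k from by omega, show n-k-1 + 1 = n - k from by omega] at h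
        exact h
      have hk0 : (k : ℝ) ≠ 0 := Nat.cast_ne_zero.mpr hkpos.ne'
      have hcast : (k : ℝ) * ((k - 1).choose (n - k - 1) : ℝ) =
          (k.choose (n - k) : ℝ) * ((n : ℝ) - k) := by
        have h := congrArg (Nat.cast : ℕ → ℝ) hnat
        push_cast at h
        rw [Nat.cast_sub hkn] at h
        exact h
      field_simp
      linarith [hcast]
  have hmul : (n : ℝ) * (∑ k ∈ Finset.range (n + 1),
      (if k = 0 then 0 else (k.choose (n - k) : ℝ) / k)) =
      (Nat.fib (n + 1) : ℝ) + (Nat.fib (n - 1) : ℝ) := by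
    rw [Finset.mul_sum, Finset.sum_congr rfl term, Finset.sum_add_distrib]
    congr 1
    · have : ∑ k ∈ Finset.range (n + 1), (if k = 0 then 0 else (k.choose (n - k) : ℝ)) =
          ∑ k ∈ Finset.range (n + 1), ((k.choose (n - k) : ℝ)) := by
        refine Finset.sum_congr rfl fun k _ => ?_
        rcases Nat.eq_zero_or_pos k with rfl | hkpos
        · simp [Nat.choose_eq_zero_of_lt (show 0 < n by omega)]
        · rw [if_neg hkpos.ne']
      rw [this, ← Nat.cast_sum]
      rw [sum_choose_diag]
    · rw [← Finset.sum_filter]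
      have hset : (Finset.range (n + 1)).filter (fun k => 1 ≤ k ∧ k ≤ n - 1) =
          Finset.Ico 1 n := by
        ext a
        simp only [Finset.mem_filter, Finset.mem_range, Finset.mem_Ico]
        omega
      rw [hset, Finset.sum_Ico_eq_sum_range]
      rcases Nat.lt_or_ge n 2 with h2 | h2
      · interval_cases n
        simp
      · have : ∀ i ∈ Finset.range (n - 1), (((1 + i - 1).choose (n - (1 + i) - 1)) : ℝ) =
            ((i.choose ((n - 2) - i)) : ℝ) := by
          intro i _
          congr 2
          · omega
          · omega
        rw [Finset.sum_congr rfl this, ← Nat.cast_sum]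
        have := sum_choose_diag (n - 2)
        rw [show (n - 2) + 1 = n - 1 by omega] at this
        rw [this]
  have hluc : (lucas n : ℝ) = (Nat.fib (n + 1) : ℝ) + (Nat.fib (n - 1) : ℝ) := by
    obtain ⟨m, rfl⟩ := Nat.exists_eq_add_of_le hn
    rw [show 1 + m = m + 1 by ring, lucas_eq_fib]
    push_cast
    simp
  rw [hluc, ← hmul]
  field_simp

/-- For `n ≥ 1`, the coefficient of `zⁿ` in `L(z) = -log(1 - z - z²)` equals
`(φⁿ + (1-φ)ⁿ)/n` with `φ = (1+√5)/2`; equivalently `n!·[zⁿ]L = (n-1)!·Lₙ`, where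
`Lₙ = φⁿ + (1-φ)ⁿ` is the `n`-th Lucas number. -/
theorem stmt7 (n : ℕ) (hn : 1 ≤ n) :
    PowerSeries.coeff (R := ℝ) n Lser =
      (((1 + Real.sqrt 5) / 2) ^ n + (1 - (1 + Real.sqrt 5) / 2) ^ n) / n ∧
    (n.factorial : ℝ) * PowerSeries.coeff (R := ℝ) n Lser = ((n - 1).factorial : ℝ) * lucas n ∧
    (lucas n : ℝ) = ((1 + Real.sqrt 5) / 2) ^ n + (1 - (1 + Real.sqrt 5) / 2) ^ n := by
  have hcoeff : PowerSeries.coeff (R := ℝ) n Lser = (lucas n : ℝ) / n := by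
    rw [coeff_Lser, key_sum n hn]
  have hg : (lucas n : ℝ) =
      ((1 + Real.sqrt 5) / 2) ^ n + (1 - (1 + Real.sqrt 5) / 2) ^ n := by
    rw [lucas_gold]
    rw [show (1 : ℝ) - (1 + Real.sqrt 5) / 2 = Real.goldenConj from by ring]
  refine ⟨by rw [hcoeff, hg], ?_, hg⟩
  obtain ⟨m, rfl⟩ : ∃ m, n = m + 1 := ⟨n - 1, by omega⟩
  rw [hcoeff, Nat.add_sub_cancel, Nat.factorial_succ]
  push_cast
  field_simp
end
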